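/- Let μ : [0,∞) → ℝ be continuous and decreasing with 0 < m ≤ μ ≤ M, let φ(s) := (1/2)∫₀^s μ(t)dt, and define E(u) := ∫_Ω φ(|e(u)|²)dx − ℓ(u) and A[u](v)(w) := ∫_Ω μ(|e(u)|²) e(v):e(w) dx, for a bounded linear functional ℓ on V. Then for all u, v ∈ V: E(u) − E(v) ≥ (1/2)A[u](u)(u) − (1/2)A[u](v)(v) − ℓ(u) + ℓ(v). -/
import Mathlib


open MeasureTheory
open scoped BigOperators

def frobIP {d : ℕ} (A B : Matrix (Fin d) (Fin d) ℝ) : ℝ :=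
  ∑ i, ∑ j, A i j * B i j

noncomputable def frobNorm {d : ℕ} (A : Matrix (Fin d) (Fin d) ℝ) : ℝ :=
  Real.sqrt (frobIP A A)

lemma frobIP_self_nonneg {d : ℕ} (A : Matrix (Fin d) (Fin d) ℝ) : 0 ≤ frobIP A A := by
  refine Finset.sum_nonneg fun i _ => Finset.sum_nonneg fun j _ => mul_self_nonneg _

lemma frobNorm_sq {d : ℕ} (A : Matrix (Fin d) (Fin d) ℝ) :
    frobNorm A ^ 2 = frobIP A A := by
  rw [frobNorm, Real.sq_sqrt (frobIP_self_nonneg A)]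

lemma key_pointwise (μ : ℝ → ℝ) (hcont : Continuous μ)
    (hdec : AntitoneOn μ (Set.Ici (0 : ℝ))) (a b : ℝ) (ha : 0 ≤ a) (hb : 0 ≤ b) :
    (1/2) * (μ a * a) - (1/2) * (μ a * b) ≤
      (1/2) * (∫ t in (0:ℝ)..a, μ t) - (1/2) * ∫ t in (0:ℝ)..b, μ t := by
  have hsub : (∫ t in (0:ℝ)..a, μ t) - ∫ t in (0:ℝ)..b, μ t = ∫ t in b..a, μ t :=
    intervalIntegral.integral_interval_sub_left (hcont.intervalIntegrable _ _)
      (hcont.intervalIntegrable _ _)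
  have hmain : μ a * (a - b) ≤ ∫ t in b..a, μ t := by
    rcases le_total b a with hba | hab
    · have hmono : ∫ t in b..a, (fun _ => μ a) t ≤ ∫ t in b..a, μ t := by
        refine intervalIntegral.integral_mono_on hba (intervalIntegrable_const)
          (hcont.intervalIntegrable _ _) fun x hx => ?_
        exact hdec (le_trans hb hx.1) ha hx.2
      simpa [smul_eq_mul, mul_comm] using hmono
    · have hmono : ∫ t in a..b, μ t ≤ ∫ t in a..b, (fun _ => μ a) t := by
        refine intervalIntegral.integral_mono_on hab (hcont.intervalIntegrable _ _)
          (intervalIntegrable_const) fun x hx => ?_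
        exact hdec ha (le_trans ha hx.1) hx.1
      rw [intervalIntegral.integral_symm]
      simp only [intervalIntegral.integral_const, smul_eq_mul] at hmono
      nlinarith
  nlinarith

theorem energy_key_inequality {d : ℕ} {Ω : Type*} [MeasureSpace Ω]
    {V : Type*} [NormedAddCommGroup V] [InnerProductSpace ℝ V]
    (e : V →ₗ[ℝ] (Ω → Matrix (Fin d) (Fin d) ℝ))
    (ℓ : V →L[ℝ] ℝ)
    (μ : ℝ → ℝ) (m M : ℝ) (hm : 0 < m) (hmM : m ≤ M)
    (hcont : Continuous μ)
    (hdec : AntitoneOn μ (Set.Ici (0 : ℝ)))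
    (hbd : ∀ t : ℝ, 0 ≤ t → m ≤ μ t ∧ μ t ≤ M)
    (φ : ℝ → ℝ) (hφ : φ = fun s : ℝ => (1 / 2) * ∫ t in (0 : ℝ)..s, μ t)
    (E : V → ℝ)
    (hE : E = fun u : V => (∫ x, φ (frobNorm (e u x) ^ 2)) - ℓ u)
    (A : V → V → V → ℝ)
    (hA : A = fun u v w : V => ∫ x, μ (frobNorm (e u x) ^ 2) * frobIP (e v x) (e w x))
    (hintφ : ∀ u : V, Integrable (fun x => φ (frobNorm (e u x) ^ 2)))
    (hintA : ∀ u v w : V,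
      Integrable (fun x => μ (frobNorm (e u x) ^ 2) * frobIP (e v x) (e w x)))
    (u v : V) :
    E u - E v ≥ (1 / 2) * A u u u - (1 / 2) * A u v v - ℓ u + ℓ v := by
  have h1 := hintφ u
  have h2 := hintφ v
  have h3 := hintA u u u
  have h4 := hintA u v v
  have hpt : ∀ x : Ω,
      (1/2) * (μ (frobNorm (e u x) ^ 2) * frobIP (e u x) (e u x)) -
        (1/2) * (μ (frobNorm (e u x) ^ 2) * frobIP (e v x) (e v x)) ≤
      φ (frobNorm (e u x) ^ 2) - φ (frobNorm (e v x) ^ 2) := by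
    intro x
    rw [hφ]
    have := key_pointwise μ hcont hdec (frobNorm (e u x) ^ 2) (frobNorm (e v x) ^ 2)
      (sq_nonneg _) (sq_nonneg _)
    simpa [frobNorm_sq] using this
  have hint : ∫ x, ((1/2) * (μ (frobNorm (e u x) ^ 2) * frobIP (e u x) (e u x)) -
        (1/2) * (μ (frobNorm (e u x) ^ 2) * frobIP (e v x) (e v x))) ≤
      ∫ x, (φ (frobNorm (e u x) ^ 2) - φ (frobNorm (e v x) ^ 2)) := by
    exact integral_mono ((h3.const_mul _).sub (h4.const_mul _)) (h1.sub h2) hpt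
  rw [integral_sub (h3.const_mul _) (h4.const_mul _), integral_sub h1 h2,
    MeasureTheory.integral_const_mul, MeasureTheory.integral_const_mul] at hint
  rw [hE, hA]
  simp only
  linarith
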